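/- Let A and A' be finite-dimensional Hopf algebras over a field k and suppose they are gauge equivalent, i.e. there exist a normalized twist J for A and a Hopf algebra isomorphism σ : A' → A^J. Then dim_k(A'^⊥) = dim_k(A^⊥); that is, the dimension of the Killing radical of A is a gauge invariant of A. -/

import Mathlib

open TensorProduct

noncomputable section

variable (k : Type*) [Field k] (A : Type*) [Ring A] [HopfAlgebra k A]

/-- `PposGen D n a = a₍₁₎ ⋯ a₍ₙ₎` (with value `ε(a)1` for `n = 0`), built from a given
comultiplication-like map `D`. -/
def PposGen (D : A →ₗ[k] A ⊗[k] A) : ℕ → (A →ₗ[k] A)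
  | 0 => Algebra.linearMap k A ∘ₗ Coalgebra.counit
  | n+1 => LinearMap.mul' k A ∘ₗ TensorProduct.map LinearMap.id (PposGen D n) ∘ₗ D

/-- Reversed products of Sweedler components: `QposGen D n a = a₍ₙ₎ ⋯ a₍₁₎`. -/
def QposGen (D : A →ₗ[k] A ⊗[k] A) : ℕ → (A →ₗ[k] A)
  | 0 => Algebra.linearMap k A ∘ₗ Coalgebra.counit
  | n+1 => LinearMap.mul' k A ∘ₗ (TensorProduct.comm k A A).toLinearMap
      ∘ₗ TensorProduct.map LinearMap.id (QposGen D n) ∘ₗ D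

/-- The `n`-th Sweedler power map associated to a comultiplication-like map `D` and an
antipode-like map `S'`: for `n ≥ 0` it is `a ↦ a₍₁₎ ⋯ a₍ₙ₎`, and for `n ≤ -1` it is
`a ↦ S'(a₍₋ₙ₎ ⋯ a₍₁₎)`. -/
def PGen (D : A →ₗ[k] A ⊗[k] A) (S' : A →ₗ[k] A) (n : ℤ) : A →ₗ[k] A :=
  if 0 ≤ n then PposGen k A D n.toNat else S' ∘ₗ QposGen k A D (-n).toNat

/-- The `n`-th Sweedler power map `P_n` of the Hopf algebra `A`. -/
def SweedlerP (n : ℤ) : A →ₗ[k] A :=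
  PGen k A Coalgebra.comul (HopfAlgebra.antipode (R := k)) n

/-- `Λ` is a left integral in `A`: `a Λ = ε(a) Λ` for all `a`. -/
def IsLeftIntegral (Λ : A) : Prop := ∀ a : A, a * Λ = Coalgebra.counit (R := k) a • Λ

/-- `α ∈ A*` is the distinguished group-like element associated to the left integral `Λ`:
`Λ a = α(a) Λ` for all `a`. -/
def IsDistinguished (Λ : A) (α : A →ₗ[k] k) : Prop := ∀ a : A, Λ * a = α a • Λ

/-- `a† = a₍₁₎ α(S⁻¹(a₍₂₎))`, as a linear map in `a` (here `Sinv` is the inverse of the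
antipode and `α` is the distinguished group-like element). -/
def dagger (α : A →ₗ[k] k) (Sinv : A →ₗ[k] A) : A →ₗ[k] A :=
  (TensorProduct.rid k A).toLinearMap ∘ₗ
    TensorProduct.map LinearMap.id (α ∘ₗ Sinv) ∘ₗ Coalgebra.comul

/-- A normalized twist `J` for the Hopf algebra `A`: an invertible element of `A ⊗ A`
(with specified inverse) satisfying `(ε ⊗ id)(J) = (id ⊗ ε)(J) = 1` and the cocycle
condition `(Δ ⊗ id)(J)(J ⊗ 1) = (id ⊗ Δ)(J)(1 ⊗ J)`. -/
structure NormalizedTwist where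
  J : A ⊗[k] A
  Jinv : A ⊗[k] A
  mul_inv : J * Jinv = 1
  inv_mul : Jinv * J = 1
  counit_id : (TensorProduct.lid k A) ((TensorProduct.map Coalgebra.counit LinearMap.id) J) = 1
  id_counit : (TensorProduct.rid k A) ((TensorProduct.map LinearMap.id Coalgebra.counit) J) = 1
  cocycle : (Algebra.TensorProduct.assoc k k k A A A)
      ((TensorProduct.map Coalgebra.comul LinearMap.id) J * (J ⊗ₜ[k] (1 : A)))
    = (TensorProduct.map LinearMap.id Coalgebra.comul) J * ((1 : A) ⊗ₜ[k] J)

variable {k A} (t : NormalizedTwist k A)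

/-- `Q_J = S(J⁽¹⁾) J⁽²⁾`. -/
def NormalizedTwist.QJ : A :=
  LinearMap.mul' k A ((TensorProduct.map (HopfAlgebra.antipode (R := k)) LinearMap.id) t.J)

/-- `Q_J⁻¹ = J⁻⁽¹⁾ S(J⁻⁽²⁾)`. -/
def NormalizedTwist.QJinv : A :=
  LinearMap.mul' k A ((TensorProduct.map LinearMap.id (HopfAlgebra.antipode (R := k))) t.Jinv)

/-- The twisted comultiplication `Δᴶ(a) = J⁻¹ Δ(a) J`. -/
def NormalizedTwist.comulJ : A →ₗ[k] A ⊗[k] A :=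
  LinearMap.mulLeft k t.Jinv ∘ₗ LinearMap.mulRight k t.J ∘ₗ Coalgebra.comul

/-- The twisted antipode `Sᴶ(a) = Q_J⁻¹ S(a) Q_J`. -/
def NormalizedTwist.SJ : A →ₗ[k] A :=
  LinearMap.mulLeft k t.QJinv ∘ₗ LinearMap.mulRight k t.QJ ∘ₗ HopfAlgebra.antipode (R := k)

/-- The `n`-th Sweedler power map of the twisted Hopf algebra `A^J`. -/
def NormalizedTwist.PJ (n : ℤ) : A →ₗ[k] A := PGen k A t.comulJ t.SJ n

/-- `T = J⁻⁽¹⁾ α(J⁻⁽²⁾)`. -/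
def NormalizedTwist.Telt (α : A →ₗ[k] k) : A :=
  (TensorProduct.rid k A) ((TensorProduct.map LinearMap.id α) t.Jinv)

/-- `R = α(J⁻⁽¹⁾) J⁻⁽²⁾`. -/
def NormalizedTwist.Relt (α : A →ₗ[k] k) : A :=
  (TensorProduct.lid k A) ((TensorProduct.map α LinearMap.id) t.Jinv)

/-- `R⁻¹ = α(J⁽¹⁾) J⁽²⁾`. -/
def NormalizedTwist.Rinv (α : A →ₗ[k] k) : A :=
  (TensorProduct.lid k A) ((TensorProduct.map α LinearMap.id) t.J)

end

noncomputable section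

variable (k : Type*) [Field k] (A : Type*) [Ring A] [HopfAlgebra k A]
variable (A' : Type*) [Ring A'] [HopfAlgebra k A']

/-- `σ : A' ≃ₐ[k] A` is an isomorphism of Hopf algebras from `A'` onto the twisted Hopf
algebra `A^J` (equivalently, a bialgebra isomorphism: an algebra isomorphism onto
`A^J = A` as an algebra which intertwines the counits and the twisted comultiplication). -/
structure IsGaugeIso (t : NormalizedTwist k A) (σ : A' ≃ₐ[k] A) : Prop where
  counit_comp : ∀ a : A', Coalgebra.counit (R := k) (σ a) = Coalgebra.counit (R := k) a
  comul_comp : ∀ a : A',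
    t.comulJ (σ a) = TensorProduct.map σ.toLinearMap σ.toLinearMap (Coalgebra.comul a)

/-- Evaluation of a polynomial `ψ ∈ k[X₁, …, X_s]` at elements `b₁, …, b_s` of a
(possibly noncommutative) algebra, where each monomial `X₁^{k₁} ⋯ X_s^{k_s}` is evaluated
in the fixed order `b₁^{k₁} ⋯ b_s^{k_s}`. -/
def ncEval {s : ℕ} (ψ : MvPolynomial (Fin s) k) (b : Fin s → A) : A :=
  ∑ d ∈ ψ.support, ψ.coeff d • (List.ofFn fun i => b i ^ d i).prod

end

noncomputable section

variable (k : Type*) [Field k] (A : Type*) [Ring A] [HopfAlgebra k A]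

/-- The adjoint representation associated to a comultiplication-like map `D` and an
antipode-like map `S'`: `(ad a)(b) = a₍₁₎ b S'(a₍₂₎)` (Sweedler components taken with
respect to `D`). -/
def adGen (D : A →ₗ[k] A ⊗[k] A) (S' : A →ₗ[k] A) : A →ₗ[k] A →ₗ[k] A :=
  TensorProduct.lift (LinearMap.mk₂ k
    (fun x y => LinearMap.mulLeft k x ∘ₗ LinearMap.mulRight k (S' y))
    (fun x x' y => by ext b; simp [add_mul])
    (fun c x y => by ext b; simp [smul_mul_assoc])
    (fun x y y' => by ext b; simp [mul_add])
    (fun c x y => by ext b; simp [mul_smul_comm])) ∘ₗ D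

/-- The adjoint representation `(ad a)(b) = a₍₁₎ b S(a₍₂₎)` of the Hopf algebra `A`. -/
def adRep : A →ₗ[k] A →ₗ[k] A :=
  adGen k A (Coalgebra.comul (R := k)) (HopfAlgebra.antipode (R := k))

/-- The Killing form `(a, b) = tr(ad(ab))` associated to `D` and `S'`. -/
def killingForm' (D : A →ₗ[k] A ⊗[k] A) (S' : A →ₗ[k] A) (a b : A) : k :=
  LinearMap.trace k A (adGen k A D S' (a * b))

/-- The Killing radical `A^⊥ = {a ∈ A ∣ (a, b) = 0 for all b ∈ A}`, as a `k`-submodule. -/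
def killingRad (D : A →ₗ[k] A ⊗[k] A) (S' : A →ₗ[k] A) : Submodule k A where
  carrier := {a : A | ∀ b : A, killingForm' k A D S' a b = 0}
  add_mem' := by
    intro a a' ha ha' b
    simp only [killingForm', Set.mem_setOf_eq] at ha ha' ⊢
    rw [add_mul, map_add, map_add, ha b, ha' b, add_zero]
  zero_mem' := by
    intro b
    simp [killingForm']
  smul_mem' := by
    intro c a ha b
    have := ha b
    simp only [killingForm'] at *
    rw [smul_mul_assoc, map_smul, map_smul, this, smul_zero]

end

/-!
Since `σ : A' → A` is an algebra isomorphism, it maps the Killing radical of `A'` onto that of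
`A` as soon as `tr (ad' c) = tr (ad (σ c))` for all `c`. Transporting along `σ` turns `ad' c`
into the adjoint action of `A^J`, i.e. `b ↦ x b Sᴶ(y)` summed over `Δᴶ(σ c) = J⁻¹ Δ(σ c) J`;
`σ` intertwines the antipodes because an antipode is the convolution inverse of the identity.
As `Sᴶ = Q_J⁻¹ S(-) Q_J`, that operator is conjugate (by right multiplication with `Q_J`) to
the one built with `S`, and `x ⊗ y ↦ (b ↦ x b S(y))` is multiplicative on `A ⊗ A`, so the
conjugation by `J` does not change the trace either. The identity `Q_J⁻¹ Q_J = 1` behind all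
this comes from applying `a ⊗ b ⊗ c ↦ a S(b) c` to the cocycle condition.
-/

open HopfAlgebra

section Sandwich

variable {k : Type*} [Field k] {A B : Type*} [Ring A] [Algebra k A] [Ring B] [Algebra k B]

def sandwich (S' : A →ₗ[k] A) : A ⊗[k] A →ₗ[k] Module.End k A :=
  TensorProduct.lift <|
    (LinearMap.mul k (Module.End k A)).compl₁₂ (LinearMap.mul k A)
      ((LinearMap.mul k A).flip ∘ₗ S')

@[simp]
theorem sandwich_tmul_apply (S' : A →ₗ[k] A) (x y b : A) :
    sandwich S' (x ⊗ₜ y) b = x * b * S' y :=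
  (mul_assoc _ _ _).symm

theorem sandwich_mulLeft_comp_mulRight_comp (p q : A) (S' : A →ₗ[k] A) (w : A ⊗[k] A) :
    sandwich (LinearMap.mulLeft k p ∘ₗ LinearMap.mulRight k q ∘ₗ S') w
      = LinearMap.mulRight k q ∘ₗ sandwich S' w ∘ₗ LinearMap.mulRight k p := by
  induction w using TensorProduct.induction_on with
  | zero => simp
  | tmul x y => ext b; simp [mul_assoc]
  | add u v hu hv => simp only [map_add, hu, hv, LinearMap.add_comp, LinearMap.comp_add]

theorem AlgEquiv.conj_sandwich (σ : B ≃ₐ[k] A) (S' : B →ₗ[k] B) (w : B ⊗[k] B) :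
    σ.toLinearEquiv.conj (sandwich S' w)
      = sandwich (σ.toLinearEquiv.conj S') (map σ.toLinearMap σ.toLinearMap w) := by
  induction w using TensorProduct.induction_on with
  | zero => simp
  | tmul x y => ext b; simp [LinearEquiv.conj_apply]
  | add u v hu hv => simp only [map_add, hu, hv]

end Sandwich

section Hopf

variable {k : Type*} [Field k] {A : Type*} [Ring A] [HopfAlgebra k A]

theorem adGen_apply (D : A →ₗ[k] A ⊗[k] A) (S' : A →ₗ[k] A) (a : A) :
    adGen k A D S' a = sandwich S' (D a) :=
  rfl

theorem sandwich_antipode_mul (u v : A ⊗[k] A) :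
    sandwich (antipode k) (u * v) = sandwich (antipode k) u * sandwich (antipode k) v :=
  LinearMap.map_mul_of_map_mul_tmul
    (fun _ _ _ _ => by ext; simp [antipode_mul_antidistrib, mul_assoc]) u v

theorem sandwich_antipode_one : sandwich (antipode k) (1 : A ⊗[k] A) = 1 := by
  ext; simp [Algebra.TensorProduct.one_def]

theorem trace_sandwich_antipode_mul_mul [FiniteDimensional k A] {u v : A ⊗[k] A}
    (huv : u * v = 1) (w : A ⊗[k] A) :
    LinearMap.trace k A (sandwich (antipode k) (v * w * u))
      = LinearMap.trace k A (sandwich (antipode k) w) := by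
  rw [sandwich_antipode_mul, sandwich_antipode_mul, LinearMap.trace_mul_cycle,
    ← sandwich_antipode_mul, huv, sandwich_antipode_one, one_mul]

end Hopf

section Twist

variable {k : Type*} [Field k] {A : Type*} [Ring A] [HopfAlgebra k A]

local notation "Δ" => Coalgebra.comul (R := k) (A := A)
local notation "ε" => Coalgebra.counit (R := k) (A := A)
local notation "φ" => LinearMap.mul' k A ∘ₗ LinearMap.rTensor A (antipode k (A := A))
local notation "θ" => LinearMap.mul' k A ∘ₗ LinearMap.lTensor A (antipode k (A := A))

theorem mul_antipode_rTensor_mul_tmul (p : A ⊗[k] A) (x y : A) :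
    φ (p * x ⊗ₜ y) = antipode k x * φ p * y := by
  induction p using TensorProduct.induction_on with
  | zero => simp
  | tmul u v => simp [antipode_mul_antidistrib, mul_assoc]
  | add p q hp hq => simp only [add_mul, map_add, hp, hq, mul_add]

theorem mul_antipode_rTensor_comul_mul (a : A) (p : A ⊗[k] A) :
    φ (Δ a * p) = ε a • φ p := by
  induction p using TensorProduct.induction_on with
  | zero => simp
  | tmul u v =>
    rw [mul_antipode_rTensor_mul_tmul, LinearMap.comp_apply,
      mul_antipode_rTensor_comul_apply, Algebra.algebraMap_eq_smul_one]
    simp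
  | add p q hp hq => simp only [mul_add, map_add, hp, hq, smul_add]

variable (k A) in
def mulAntipodeMul : A ⊗[k] (A ⊗[k] A) →ₗ[k] A :=
  LinearMap.mul' k A ∘ₗ (φ).lTensor A

@[simp]
theorem mulAntipodeMul_tmul (a b c : A) :
    mulAntipodeMul k A (a ⊗ₜ (b ⊗ₜ c)) = a * antipode k b * c := by
  simp [mulAntipodeMul, mul_assoc]

theorem mulAntipodeMul_tmul_mul_assoc (c d : A) (p q : A ⊗[k] A) :
    mulAntipodeMul k A (c ⊗ₜ p * Algebra.TensorProduct.assoc k k k A A A (q ⊗ₜ d))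
      = c * θ q * (φ p * d) := by
  induction p using TensorProduct.induction_on with
  | zero => simp
  | tmul y z =>
    induction q using TensorProduct.induction_on with
    | zero => simp
    | tmul u w => simp [antipode_mul_antidistrib, mul_assoc]
    | add q q' hq hq' => simp only [add_tmul, map_add, mul_add, hq, hq', add_mul]
  | add p p' hp hp' => simp only [tmul_add, add_mul, map_add, hp, hp', mul_add]

theorem mulAntipodeMul_map_comul_mul_assoc_map_comul (p q : A ⊗[k] A) :
    mulAntipodeMul k A
        (map LinearMap.id Δ p * Algebra.TensorProduct.assoc k k k A A A (map Δ LinearMap.id q))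
      = TensorProduct.rid k A (map LinearMap.id ε p)
          * TensorProduct.lid k A (map ε LinearMap.id q) := by
  induction p using TensorProduct.induction_on with
  | zero => simp
  | tmul x y =>
    induction q using TensorProduct.induction_on with
    | zero => simp
    | tmul u v =>
      rw [map_tmul, map_tmul, mulAntipodeMul_tmul_mul_assoc,
        LinearMap.comp_apply, LinearMap.comp_apply, mul_antipode_rTensor_comul_apply,
        mul_antipode_lTensor_comul_apply]
      simp [Algebra.algebraMap_eq_smul_one, smul_smul, mul_comm]
    | add q q' hq hq' => simp only [map_add, mul_add, hq, hq']
  | add p p' hp hp' => simp only [map_add, add_mul, hp, hp']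

namespace NormalizedTwist

variable (t : NormalizedTwist k A)

theorem comulJ_apply (a : A) : t.comulJ a = t.Jinv * Δ a * t.J :=
  (mul_assoc _ _ _).symm

theorem id_counit_Jinv : TensorProduct.rid k A (map LinearMap.id ε t.Jinv) = 1 := by
  let ρ : A ⊗[k] A →ₐ[k] A := (Algebra.TensorProduct.rid k k A).toAlgHom.comp
    (Algebra.TensorProduct.map (AlgHom.id k A) (Bialgebra.counitAlgHom k A))
  calc TensorProduct.rid k A (map LinearMap.id ε t.Jinv) = ρ t.Jinv * ρ t.J := by
        rw [show ρ t.J = 1 from t.id_counit, mul_one]; rfl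
    _ = 1 := by rw [← map_mul, t.inv_mul, map_one]

/-- The cocycle condition, solved for `(1 ⊗ J)(J⁻¹ ⊗ 1)`. -/
theorem one_tmul_J_mul_Jinv_tmul_one :
    (1 : A) ⊗ₜ t.J * Algebra.TensorProduct.assoc k k k A A A (t.Jinv ⊗ₜ 1)
      = map LinearMap.id Δ t.Jinv
          * Algebra.TensorProduct.assoc k k k A A A (map Δ LinearMap.id t.J) := by
  let Δr := Algebra.TensorProduct.map (AlgHom.id k A) (Bialgebra.comulAlgHom k A)
  let assoc := Algebra.TensorProduct.assoc k k k A A A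
  have hcocycle : map LinearMap.id Δ t.J * ((1 : A) ⊗ₜ t.J * assoc (t.Jinv ⊗ₜ 1))
      = assoc (map Δ LinearMap.id t.J) := by
    rw [← mul_assoc, ← t.cocycle, ← map_mul, mul_assoc, Algebra.TensorProduct.tmul_mul_tmul,
      t.mul_inv, one_mul, ← Algebra.TensorProduct.one_def, mul_one]
  calc (1 : A) ⊗ₜ t.J * assoc (t.Jinv ⊗ₜ 1)
      = Δr (t.Jinv * t.J) * ((1 : A) ⊗ₜ t.J * assoc (t.Jinv ⊗ₜ 1)) := by
        rw [t.inv_mul, map_one, one_mul]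
    _ = map LinearMap.id Δ t.Jinv * assoc (map Δ LinearMap.id t.J) := by
        rw [map_mul, mul_assoc]
        exact congrArg (Δr t.Jinv * ·) hcocycle

theorem QJinv_mul_QJ : t.QJinv * t.QJ = 1 :=
  calc t.QJinv * t.QJ
      = mulAntipodeMul k A
          ((1 : A) ⊗ₜ t.J * Algebra.TensorProduct.assoc k k k A A A (t.Jinv ⊗ₜ 1)) := by
        rw [mulAntipodeMul_tmul_mul_assoc, one_mul, mul_one]; rfl
    _ = 1 := by
        rw [one_tmul_J_mul_Jinv_tmul_one, mulAntipodeMul_map_comul_mul_assoc_map_comul,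
          id_counit_Jinv, one_mul]
        exact t.counit_id

theorem QJ_mul_QJinv [FiniteDimensional k A] : t.QJ * t.QJinv = 1 :=
  have := IsArtinianRing.of_finite k A
  mul_eq_one_comm.mp t.QJinv_mul_QJ

theorem mul'_map_SJ (w : A ⊗[k] A) :
    LinearMap.mul' k A (map t.SJ LinearMap.id w) = t.QJinv * φ (t.J * w) := by
  induction w using TensorProduct.induction_on with
  | zero => simp
  | tmul x y =>
    rw [mul_antipode_rTensor_mul_tmul]
    simp [SJ, QJ, LinearMap.rTensor, mul_assoc]
  | add v w hv hw => simp only [map_add, mul_add, hv, hw]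

theorem mul'_map_SJ_comulJ (a : A) :
    LinearMap.mul' k A (map t.SJ LinearMap.id (t.comulJ a)) = algebraMap k A (ε a) := by
  rw [mul'_map_SJ, comulJ_apply, ← mul_assoc, ← mul_assoc, t.mul_inv, one_mul,
    mul_antipode_rTensor_comul_mul, mul_smul_comm, show φ t.J = t.QJ from rfl, QJinv_mul_QJ,
    Algebra.algebraMap_eq_smul_one]

end NormalizedTwist

end Twist

section Gauge

variable {k : Type*} [Field k] {A A' : Type*} [Ring A] [HopfAlgebra k A] [Ring A']
  [HopfAlgebra k A']

theorem NormalizedTwist.trace_sandwich_SJ [FiniteDimensional k A] (t : NormalizedTwist k A)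
    (w : A ⊗[k] A) :
    LinearMap.trace k A (sandwich t.SJ w) = LinearMap.trace k A (sandwich (antipode k) w) := by
  rw [NormalizedTwist.SJ, sandwich_mulLeft_comp_mulRight_comp, LinearMap.trace_comp_comm',
    LinearMap.comp_assoc, ← LinearMap.mulRight_mul, t.QJ_mul_QJinv, LinearMap.mulRight_one,
    LinearMap.comp_id]

theorem NormalizedTwist.trace_adGen_comulJ_SJ [FiniteDimensional k A] (t : NormalizedTwist k A)
    (a : A) :
    LinearMap.trace k A (adGen k A t.comulJ t.SJ a) = LinearMap.trace k A (adRep k A a) := by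
  rw [adGen_apply, t.trace_sandwich_SJ, t.comulJ_apply, trace_sandwich_antipode_mul_mul t.mul_inv]
  rfl

theorem IsGaugeIso.comp_antipode {t : NormalizedTwist k A} {σ : A' ≃ₐ[k] A}
    (hσ : IsGaugeIso k A A' t σ) :
    σ.toLinearMap ∘ₗ antipode k = t.SJ ∘ₗ σ.toLinearMap := by
  -- `Sᴶ ∘ σ` is a left and `σ ∘ S` a right convolution inverse of `σ`.
  refine WithConv.toConv_injective (left_inv_eq_right_inv (a := WithConv.toConv σ.toLinearMap)
    ?_ ?_).symm
  · have hmap : map (t.SJ ∘ₗ σ.toLinearMap) σ.toLinearMap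
        = map t.SJ LinearMap.id ∘ₗ map σ.toLinearMap σ.toLinearMap := by
      rw [← map_comp, LinearMap.id_comp]
    ext x
    rw [LinearMap.convMul_apply, WithConv.ofConv_toConv, WithConv.ofConv_toConv, hmap,
      LinearMap.comp_apply, ← hσ.comul_comp, t.mul'_map_SJ_comulJ, hσ.counit_comp]
    rfl
  · have h := LinearMap.algHom_comp_convMul_distrib σ.toAlgHom (WithConv.toConv LinearMap.id)
      (WithConv.toConv (antipode k))
    rw [LinearMap.id_mul_antipode] at h
    ext x
    simpa using (LinearMap.congr_fun h x).symm

theorem IsGaugeIso.trace_adRep [FiniteDimensional k A'] {t : NormalizedTwist k A}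
    {σ : A' ≃ₐ[k] A} (hσ : IsGaugeIso k A A' t σ) (c : A') :
    LinearMap.trace k A' (adRep k A' c)
      = LinearMap.trace k A (adGen k A t.comulJ t.SJ (σ c)) := by
  have hSJ : σ.toLinearEquiv.conj (antipode k) = t.SJ := by
    ext a
    simpa using LinearMap.congr_fun hσ.comp_antipode (σ.symm a)
  rw [← LinearMap.trace_conj' _ σ.toLinearEquiv, adRep, adGen_apply, AlgEquiv.conj_sandwich, hSJ,
    ← hσ.comul_comp, adGen_apply]

end Gauge

section KillingRadical

variable {k : Type*} [Field k] {A A' : Type*} [Ring A] [HopfAlgebra k A] [Ring A']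
  [HopfAlgebra k A']

theorem mem_killingRad {D : A →ₗ[k] A ⊗[k] A} {S' : A →ₗ[k] A} {a : A} :
    a ∈ killingRad k A D S' ↔ ∀ b, killingForm' k A D S' a b = 0 :=
  Iff.rfl

theorem killingRad_eq_comap_of_trace_adGen {D : A →ₗ[k] A ⊗[k] A} {S' : A →ₗ[k] A}
    {D' : A' →ₗ[k] A' ⊗[k] A'} {S'' : A' →ₗ[k] A'} (σ : A' ≃ₐ[k] A)
    (h : ∀ c, LinearMap.trace k A' (adGen k A' D' S'' c)
      = LinearMap.trace k A (adGen k A D S' (σ c))) :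
    killingRad k A' D' S'' = (killingRad k A D S').comap σ.toLinearMap := by
  ext a
  simp only [Submodule.mem_comap, mem_killingRad, killingForm', h, map_mul,
    AlgEquiv.toLinearMap_apply]
  exact ⟨fun h b => by simpa using h (σ.symm b), fun h b => h (σ b)⟩

theorem finrank_killingRad_eq_of_trace_adGen {D : A →ₗ[k] A ⊗[k] A} {S' : A →ₗ[k] A}
    {D' : A' →ₗ[k] A' ⊗[k] A'} {S'' : A' →ₗ[k] A'} (σ : A' ≃ₐ[k] A)
    (h : ∀ c, LinearMap.trace k A' (adGen k A' D' S'' c)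
      = LinearMap.trace k A (adGen k A D S' (σ c))) :
    Module.finrank k (killingRad k A' D' S'') = Module.finrank k (killingRad k A D S') := by
  rw [killingRad_eq_comap_of_trace_adGen σ h, ← LinearEquiv.finrank_map_eq σ.toLinearEquiv]
  exact congrArg (fun K : Submodule k A => Module.finrank k K)
    (Submodule.map_comap_eq_of_surjective σ.toLinearEquiv.surjective _)

end KillingRadical

/-- Corollary 5.5. Let `A` and `A'` be gauge equivalent
finite-dimensional Hopf algebras. Then `dim_k(A'^⊥) = dim_k(A^⊥)`: the dimension of the
Killing radical is a gauge invariant of `A`. -/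
theorem killing_radical_dim_gauge_invariant
    (k : Type*) [Field k] (A : Type*) [Ring A] [HopfAlgebra k A] [FiniteDimensional k A]
    (A' : Type*) [Ring A'] [HopfAlgebra k A'] [FiniteDimensional k A']
    (t : NormalizedTwist k A) (σ : A' ≃ₐ[k] A) (hσ : IsGaugeIso k A A' t σ) :
    Module.finrank k
        (killingRad k A' (Coalgebra.comul (R := k)) (HopfAlgebra.antipode (R := k)))
      = Module.finrank k
          (killingRad k A (Coalgebra.comul (R := k)) (HopfAlgebra.antipode (R := k))) :=
  finrank_killingRad_eq_of_trace_adGen σ fun c =>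
    (hσ.trace_adRep c).trans (t.trace_adGen_comulJ_SJ (σ c))
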